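/- arXiv:1602.04331 — 7 statements merged into one kernel-verified Lean document; each statement's English description precedes it below -/
import Mathlib

section
/- For integers n ≥ 1 and 0 ≤ s ≤ n-1, the identity (∑_{y=0}^{n-s-1} C(n-1-y, n-s-1-y)·2^y) + (∑_{y=0}^{s} C(n-1-y, s-y)·2^y) = 2^n holds. -/
/-!
Both sums are partial sums of the binomial row of `n`: for `k < n`,
`∑_{y ≤ k} C(n-1-y, k-y) 2^y = ∑_{j ≤ k} C(n, j)`, since both sides satisfy
`F(n+1, k+1) = C(n, k+1) + 2 F(n, k)`. The two partial sums, up to `n - 1 - s` and up to `s`,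
cover complementary halves of the row by the symmetry `C(n, j) = C(n, n - j)`, so they add up
to `2^n`.
-/

open Finset

namespace Nat

theorem sum_range_choose_add_sum_range_choose {n a b : ℕ} (h : a + b = n + 1) :
    ∑ j ∈ range a, n.choose j + ∑ j ∈ range b, n.choose j = 2 ^ n := by
  induction a generalizing b with
  | zero => rw [← sum_range_choose n, ← h, zero_add, sum_range_zero, zero_add]
  | succ a ih =>
    have hab : n.choose a = n.choose b := choose_symm_of_eq_add (by omega)
    rw [← ih (b := b + 1) (by omega), sum_range_succ, sum_range_succ, hab]
    ring

theorem sum_range_choose_succ_succ (n k : ℕ) :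
    ∑ j ∈ range (k + 2), (n + 1).choose j =
      n.choose (k + 1) + 2 * ∑ j ∈ range (k + 1), n.choose j := by
  have shifted :
      ∑ j ∈ range (k + 1), n.choose (j + 1) + 1 = ∑ j ∈ range (k + 2), n.choose j := by
    rw [sum_range_succ' _ (k + 1), choose_zero_right]
  rw [sum_range_succ' _ (k + 1)]
  simp only [choose_succ_succ', sum_add_distrib, choose_zero_right]
  rw [sum_range_succ _ (k + 1)] at shifted
  omega

theorem sum_range_choose_sub_mul_two_pow {m k : ℕ} (h : k ≤ m) :
    ∑ y ∈ range (k + 1), (m - y).choose (k - y) * 2 ^ y =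
      ∑ j ∈ range (k + 1), (m + 1).choose j := by
  induction k generalizing m with
  | zero => simp
  | succ k ih =>
    obtain ⟨m, rfl⟩ : ∃ m', m = m' + 1 := ⟨m - 1, by omega⟩
    rw [sum_range_succ', sum_range_choose_succ_succ, ← ih (by omega), mul_sum]
    simp only [Nat.add_sub_add_right, Nat.sub_zero, pow_zero, mul_one, pow_succ]
    rw [add_comm]
    congr 1
    exact sum_congr rfl fun y _ => by ring

end Nat

theorem roll_call_identity_general (n s : ℕ) (hs : s ≤ n - 1) :
    (∑ y ∈ Finset.range (n - s), Nat.choose (n - 1 - y) (n - s - 1 - y) * 2 ^ y) +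
      (∑ y ∈ Finset.range (s + 1), Nat.choose (n - 1 - y) (s - y) * 2 ^ y) = 2 ^ n := by
  rcases n with _ | m
  · obtain rfl : s = 0 := by omega
    rfl
  rw [show m + 1 - s = m - s + 1 by omega]
  simp only [Nat.add_sub_cancel]
  rw [Nat.sum_range_choose_sub_mul_two_pow (Nat.sub_le m s),
    Nat.sum_range_choose_sub_mul_two_pow (by omega : s ≤ m)]
  exact Nat.sum_range_choose_add_sum_range_choose (by omega)

/-- For `n ≥ 1` and `0 ≤ s ≤ n-1`:
`(∑_{y=0}^{n-s-1} C(n-1-y, n-s-1-y)·2^y) + (∑_{y=0}^{s} C(n-1-y, s-y)·2^y) = 2^n`. -/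
theorem roll_call_identity (n s : ℕ) (hn : 1 ≤ n) (hs : s ≤ n - 1) :
    (∑ y ∈ Finset.range (n - s), Nat.choose (n - 1 - y) (n - s - 1 - y) * 2 ^ y) +
      (∑ y ∈ Finset.range (s + 1), Nat.choose (n - 1 - y) (s - y) * 2 ^ y) = 2 ^ n :=
  roll_call_identity_general n s hs
end

section
/- Let v : J^n → K be a (J,K) game with image of size at least 2, and define φ_i(v) = (1/(n!·|J|^n·(|im(v)|-1))) · ∑_{(π,a) ∈ S_n × J^n} τ_{π^{-1}(i)}(v,π,a), where τ_h(v,π,a) is the decrease in the number of possible outcomes after the h-th player (according to π) declares her vote a. Then ∑_{i=1}^n φ_i(v) = 1. -/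
open Finset

/-- The set of still-possible outcomes after the first `h` players (according to the
ordering `π`, where player `l` is called at position `π l`, `0`-indexed) have declared
their votes from the vote vector `a`. -/
def outcomes {n : ℕ} {J K : Type*} [Fintype J] [DecidableEq J] [DecidableEq K]
    (v : (Fin n → J) → K) (π : Equiv.Perm (Fin n)) (a : Fin n → J) (h : ℕ) : Finset K :=
  (Finset.univ.filter (fun a' : Fin n → J => ∀ l, (π l : ℕ) < h → a' l = a l)).image v

/-- `τ_h`: the decrease of uncertainty caused by the declaration of the `h`-th player
(`h` ranging in `1,…,n`). -/
def tau {n : ℕ} {J K : Type*} [Fintype J] [DecidableEq J] [DecidableEq K]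
    (v : (Fin n → J) → K) (π : Equiv.Perm (Fin n)) (a : Fin n → J) (h : ℕ) : ℕ :=
  (outcomes v π a (h - 1)).card - (outcomes v π a h).card

/-- The influence measure `φ_i` of Definition 3.2. Player `i` occupies position
`π i + 1` (1-indexed), i.e. `π⁻¹(i) = π i + 1` in the paper's notation. -/
noncomputable def phi {n : ℕ} {J K : Type*} [Fintype J] [DecidableEq J] [DecidableEq K]
    (v : (Fin n → J) → K) (i : Fin n) : ℝ :=
  (1 / ((n.factorial : ℝ) * (Fintype.card J : ℝ) ^ n *
      (((Finset.univ.image v).card : ℝ) - 1))) *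
    ∑ π : Equiv.Perm (Fin n), ∑ a : Fin n → J, (tau v π a ((π i : ℕ) + 1) : ℝ)

section

variable {n : ℕ} {J K : Type*} [Fintype J] [DecidableEq J] [DecidableEq K]
  (v : (Fin n → J) → K) (π : Equiv.Perm (Fin n)) (a : Fin n → J)

lemma outcomes_card_antitone : Antitone fun h => (outcomes v π a h).card := by
  intro h₁ h₂ hle
  refine card_le_card (image_subset_image fun a' ha' => ?_)
  simp only [mem_filter, mem_univ, true_and] at ha' ⊢
  exact fun l hl => ha' l (hl.trans_le hle)

lemma outcomes_zero : outcomes v π a 0 = univ.image v := by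
  simp [outcomes]

lemma outcomes_self : outcomes v π a n = {v a} := by
  have hfix : univ.filter (fun a' : Fin n → J => ∀ l, (π l : ℕ) < n → a' l = a l) = {a} := by
    ext a'
    simp only [mem_filter, mem_univ, true_and, mem_singleton, funext_iff]
    exact forall_congr' fun l => imp_iff_right (π l).isLt
  rw [outcomes, hfix, image_singleton]

lemma sum_range_tau (k : ℕ) :
    ∑ h ∈ range k, tau v π a (h + 1) = #(outcomes v π a 0) - #(outcomes v π a k) := by
  induction k with
  | zero => simp
  | succ k ih =>
    have h₁ : #(outcomes v π a k) ≤ #(outcomes v π a 0) :=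
      outcomes_card_antitone v π a (Nat.zero_le k)
    have h₂ : #(outcomes v π a (k + 1)) ≤ #(outcomes v π a k) :=
      outcomes_card_antitone v π a k.le_succ
    rw [sum_range_succ, ih, tau, Nat.add_sub_cancel]
    omega

/-- Along any ordering the declarations telescope: together they reduce the set of possible
outcomes from the whole image of `v` to the single outcome `v a`. -/
lemma sum_tau_position :
    ∑ i, tau v π a ((π i : ℕ) + 1) = #(univ.image v) - 1 := by
  rw [Equiv.sum_comp π fun i => tau v π a ((i : ℕ) + 1),
    Fin.sum_univ_eq_sum_range (fun h => tau v π a (h + 1)), sum_range_tau, outcomes_zero,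
    outcomes_self, card_singleton]

lemma sum_sum_sum_tau :
    ∑ i, ∑ π : Equiv.Perm (Fin n), ∑ a : Fin n → J, tau v π a ((π i : ℕ) + 1)
      = n.factorial * Fintype.card J ^ n * (#(univ.image v) - 1) := by
  rw [sum_comm]
  simp_rw [sum_comm (s := univ (α := Fin n)), sum_tau_position, sum_const, card_univ,
    Fintype.card_perm, Fintype.card_fun, Fintype.card_fin, smul_eq_mul, mul_assoc]

lemma phi_nonneg (i : Fin n) : 0 ≤ phi v i := by
  rcases isEmpty_or_nonempty (Fin n → J) with _ | _
  · simp [phi]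
  · have hpos : 1 ≤ (#(univ.image v) : ℝ) := by
      exact_mod_cast card_pos.2 (univ_nonempty.image v)
    have hcoef : 0 ≤ (n.factorial : ℝ) * (Fintype.card J : ℝ) ^ n * (#(univ.image v) - 1) :=
      mul_nonneg (by positivity) (sub_nonneg.2 hpos)
    exact mul_nonneg (one_div_nonneg.2 hcoef) (by positivity)

lemma sum_phi_eq_one (him : 1 < #(univ.image v)) : ∑ i, phi v i = 1 := by
  have hJ : 0 < Fintype.card J ^ n := by
    obtain ⟨a, -⟩ := (card_pos.1 (one_pos.trans him)).of_image
    simpa [Fintype.card_fun] using Fintype.card_pos_iff.2 ⟨a⟩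
  have hcast := congrArg (Nat.cast : ℕ → ℝ) (sum_sum_sum_tau v)
  push_cast [Nat.cast_sub him.le] at hcast
  have hden : (n.factorial : ℝ) * (Fintype.card J : ℝ) ^ n * (#(univ.image v) - 1) ≠ 0 := by
    have him' : (1 : ℝ) < #(univ.image v) := by exact_mod_cast him
    have hJ' : (0 : ℝ) < (Fintype.card J : ℝ) ^ n := by exact_mod_cast hJ
    exact (mul_pos (mul_pos (by positivity) hJ') (sub_pos.2 him')).ne'
  simp only [phi, ← mul_sum, hcast, one_div_mul_cancel hden]

end

/-- Lemma 3.3 (efficiency): if the image of `v` has more than one element, the influence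
measures of all players sum to `1`, and each lies in `[0,1]`. -/
theorem phi_efficient {n : ℕ} {J K : Type*} [Fintype J] [DecidableEq J] [DecidableEq K]
    (v : (Fin n → J) → K) (him : 1 < (Finset.univ.image v).card) :
    (∑ i : Fin n, phi v i) = 1 ∧ ∀ i : Fin n, phi v i ∈ Set.Icc (0 : ℝ) 1 := by
  have hsum := sum_phi_eq_one v him
  refine ⟨hsum, fun i => ⟨phi_nonneg v i, ?_⟩⟩
  exact hsum ▸ single_le_sum (fun j _ => phi_nonneg v j) (mem_univ i)
end

section
/- If player i is a null player in a (J,K) game v (i.e., the value of v never depends on the i-th coordinate), then τ_h(v,π,a) = 0 whenever π(i) = h, for all permutations π and all input vectors a; consequently the influence measure φ_i(v) = 0. -/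
/-! A null player's vote can be overwritten by the actual one without changing the outcome, so
every outcome still possible before she declares remains possible afterwards: her declaration
removes no uncertainty, and `φ_i` averages only zeros. -/

open Finset

section RollCall

variable {n : ℕ} {J K : Type*} [Fintype J] [DecidableEq J] [DecidableEq K]
  (v : (Fin n → J) → K) (π : Equiv.Perm (Fin n)) (a : Fin n → J)

theorem outcomes_antitone : Antitone (outcomes v π a) := by
  intro h h' hle
  refine image_subset_image fun a' ha' => ?_
  simp only [mem_filter, mem_univ, true_and] at ha' ⊢
  exact fun l hl => ha' l (hl.trans_le hle)

variable {v} {i : Fin n}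

theorem outcomes_succ_eq_of_null
    (hnull : ∀ (a : Fin n → J) (x : J), v (Function.update a i x) = v a) :
    outcomes v π a ((π i : ℕ) + 1) = outcomes v π a (π i) := by
  refine (outcomes_antitone v π a (Nat.le_succ _)).antisymm fun k hk => ?_
  simp only [outcomes, mem_image, mem_filter, mem_univ, true_and] at hk ⊢
  obtain ⟨a', ha', rfl⟩ := hk
  refine ⟨Function.update a' i (a i), fun l hl => ?_, hnull a' (a i)⟩
  rcases Nat.lt_succ_iff_lt_or_eq.mp hl with hlt | heq
  · rw [Function.update_of_ne (by rintro rfl; exact lt_irrefl _ hlt)]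
    exact ha' l hlt
  · rw [π.injective (Fin.ext heq), Function.update_self]

theorem tau_eq_zero_of_null
    (hnull : ∀ (a : Fin n → J) (x : J), v (Function.update a i x) = v a) :
    tau v π a ((π i : ℕ) + 1) = 0 := by
  simp [tau, outcomes_succ_eq_of_null π a hnull]

theorem phi_eq_zero_of_forall_tau_eq_zero
    (htau : ∀ (π : Equiv.Perm (Fin n)) (a : Fin n → J), tau v π a ((π i : ℕ) + 1) = 0) :
    phi v i = 0 := by
  simp [phi, htau]

end RollCall

/-- A null player never reduces the uncertainty, hence has influence measure `0`. -/
theorem null_player_phi_zero {n : ℕ} {J K : Type*} [Fintype J] [DecidableEq J]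
    [DecidableEq K] (v : (Fin n → J) → K) (i : Fin n)
    (hnull : ∀ (a : Fin n → J) (x : J), v (Function.update a i x) = v a) :
    (∀ (π : Equiv.Perm (Fin n)) (a : Fin n → J), tau v π a ((π i : ℕ) + 1) = 0) ∧
      phi v i = 0 :=
  have htau := fun π a => tau_eq_zero_of_null π a hnull
  ⟨htau, phi_eq_zero_of_forall_tau_eq_zero htau⟩
end

section
/- Let v : {1,2}^n → {1,2} be a monotone surjective map corresponding to a simple game ṽ on player set N = {1,…,n}, and fix a player i and an integer h with 0 ≤ h ≤ n. Then C(n,h) · ∑_{S is an i-swing} |S|!·(n−1−|S|)! equals the number of pairs (π, a) with π a permutation of N, a ∈ {1,2}^n having exactly h coordinates equal to 2, such that player i is pivotal for (π, a), i.e., (v̄_{π,p-1}(a) − v̲_{π,p-1}(a)) − (v̄_{π,p}(a) − v̲_{π,p}(a)) = 1 where p = π^{-1}(i). -/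
open Finset

/-- Votes `{1,2}` encoded as `Fin 2` (`1 ↦ 0`, `2 ↦ 1`). Maximal extension. -/
def vbar {n : ℕ} (v : (Fin n → Fin 2) → Fin 2) (π : Equiv.Perm (Fin n))
    (a : Fin n → Fin 2) (h : ℕ) : Fin 2 :=
  v (fun l => if (π l : ℕ) < h then a l else 1)

/-- Minimal extension. -/
def vbot {n : ℕ} (v : (Fin n → Fin 2) → Fin 2) (π : Equiv.Perm (Fin n))
    (a : Fin n → Fin 2) (h : ℕ) : Fin 2 :=
  v (fun l => if (π l : ℕ) < h then a l else 0)

/-- Characteristic vector of a coalition `S` ("yes" = `1 : Fin 2`). -/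
def charVec {n : ℕ} (S : Finset (Fin n)) : Fin n → Fin 2 :=
  fun l => if l ∈ S then 1 else 0

/-- Player `i` is pivotal for `(π, a)` in `v`. -/
def Pivotal {n : ℕ} (v : (Fin n → Fin 2) → Fin 2) (π : Equiv.Perm (Fin n))
    (a : Fin n → Fin 2) (i : Fin n) : Prop :=
  (((vbar v π a (π i) : ℕ) : ℤ) - ((vbot v π a (π i) : ℕ) : ℤ)) -
    (((vbar v π a ((π i : ℕ) + 1) : ℕ) : ℤ) - ((vbot v π a ((π i : ℕ) + 1) : ℕ) : ℤ)) = 1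

instance {n : ℕ} (v : (Fin n → Fin 2) → Fin 2) (π : Equiv.Perm (Fin n))
    (a : Fin n → Fin 2) (i : Fin n) : Decidable (Pivotal v π a i) := by
  unfold Pivotal; infer_instance

/-!
Let `L` be the set of players preceding `i` in `π` and `T` the set of players voting `2`.
Comparing the four extensions, `i` is pivotal for `(π, a)` exactly when the coalition
`S = L ∩ T` (if `i ∈ T`), resp. `S = (L ∩ T) ∪ {players after i}` (if `i ∉ T`), is an
`i`-swing. So it suffices that each `S ∌ i` arises from `C(n,h) |S|! (n-1-|S|)!` pairs
with `|T| = h`. Complementing the votes swaps the two cases (`S ↦ N ∖ (S ∪ {i})`,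
`h ↦ n - h`). When `i ∈ T`, the set `L = S ∪ M` is realised by `|L|! (n-1-|L|)!` orders and
`C(n-1-|L|, h-1-|S|)` vote sets, and the sum over `M` is a Chu–Vandermonde identity with
negative upper indices.
-/

open Nat

namespace Nat

theorem sum_antidiagonal_add_choose_mul_add_choose (a b k : ℕ) :
    ∑ p ∈ antidiagonal k, (a + p.1).choose p.1 * (b + p.2).choose p.2 =
      (a + b + 1 + k).choose k := by
  have hneg (c m : ℕ) :
      Ring.choose (-((c + 1 : ℕ) : ℤ)) m = (-1) ^ m * ((c + m).choose m : ℤ) := by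
    rw [Ring.choose_neg, Units.smul_def, Int.coe_negOnePow_natCast, smul_eq_mul,
      ← Ring.choose_natCast]
    push_cast
    ring_nf
  have vandermonde := Ring.add_choose_eq (R := ℤ) k
    (Commute.all (-((a + 1 : ℕ) : ℤ)) (-((b + 1 : ℕ) : ℤ)))
  rw [show -((a + 1 : ℕ) : ℤ) + -((b + 1 : ℕ) : ℤ) = -((a + b + 1 + 1 : ℕ) : ℤ) by
    push_cast; ring, hneg] at vandermonde
  have hsign : ∀ p ∈ antidiagonal k, Ring.choose (-((a + 1 : ℕ) : ℤ)) p.1 *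
      Ring.choose (-((b + 1 : ℕ) : ℤ)) p.2 =
      (-1) ^ k * ((a + p.1).choose p.1 * (b + p.2).choose p.2 : ℕ) := by
    intro p hp
    rw [hneg, hneg, ← mem_antidiagonal.mp hp]
    push_cast
    ring
  rw [sum_congr rfl hsign, ← mul_sum] at vandermonde
  exact_mod_cast (mul_right_injective₀ (pow_ne_zero k (by norm_num : (-1 : ℤ) ≠ 0))
    vandermonde).symm

theorem sum_range_add_choose_mul_choose (r s t : ℕ) :
    ∑ m ∈ range (r + 1), (s + m).choose m * (r - m).choose t =
      (r + s + 1).choose (s + t + 1) := by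
  rcases lt_or_ge r t with hrt | hrt
  · rw [choose_eq_zero_of_lt (by omega), sum_eq_zero]
    intro m _
    rw [choose_eq_zero_of_lt (show r - m < t by omega), mul_zero]
  obtain ⟨d, rfl⟩ := exists_add_of_le hrt
  have hvanish : ∀ m ∈ range (t + d + 1), m ∉ range (d + 1) →
      (s + m).choose m * (t + d - m).choose t = 0 := by
    intro m hm hm'
    rw [mem_range] at hm hm'
    rw [choose_eq_zero_of_lt (show t + d - m < t by omega), mul_zero]
  have key := sum_antidiagonal_add_choose_mul_add_choose s t d
  rw [Finset.Nat.sum_antidiagonal_eq_sum_range_succ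
    (fun i j => (s + i).choose i * (t + j).choose j)] at key
  rw [← sum_subset (range_subset_range.mpr (by omega)) hvanish,
    choose_symm_of_eq_add (show t + d + s + 1 = (s + t + 1) + d by omega),
    show t + d + s + 1 = s + t + 1 + d by omega, ← key]
  refine sum_congr rfl fun m hm => ?_
  rw [mem_range] at hm
  rw [show t + d - m = t + (d - m) by omega, choose_symm_add]

theorem sum_range_choose_mul_factorial_mul_choose (r s t : ℕ) :
    ∑ m ∈ range (r + 1), r.choose m * ((s + m)! * (r - m)! * (r - m).choose t) =
      (r + s + 1).choose (s + t + 1) * (s ! * r !) := by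
  rw [← sum_range_add_choose_mul_choose, sum_mul]
  refine sum_congr rfl fun m hm => ?_
  have hmr : m ≤ r := Nat.lt_succ_iff.mp (mem_range.mp hm)
  rw [← add_choose_mul_factorial_mul_factorial s m, ← choose_mul_factorial_mul_factorial hmr]
  ring

end Nat

theorem card_perm_comp_eq {α ι : Type*} [Fintype α] [DecidableEq α] [Fintype ι]
    [DecidableEq ι] (f g : α → ι)
    (hfg : ∀ c, Fintype.card {x // f x = c} = Fintype.card {y // g y = c}) :
    #{π : Equiv.Perm α | g ∘ π = f} = ∏ c, (Fintype.card {x // f x = c})! := by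
  set π₀ : Equiv.Perm α := Equiv.ofFiberEquiv fun c => Fintype.equivOfCardEq (hfg c)
  have hπ₀ : g ∘ π₀ = f := funext (Equiv.ofFiberEquiv_map _)
  have hcomp (π : Equiv.Perm α) : f ∘ ⇑(π₀⁻¹ * π) = g ∘ π := by
    ext x
    simp [← hπ₀]
  rw [← DomMulAct.stabilizer_card, ← Fintype.card_subtype]
  exact Fintype.card_congr (Equiv.subtypeEquiv (Equiv.mulLeft π₀⁻¹) fun π => by
    simp only [Equiv.coe_mulLeft, hcomp])

section Coalition

variable {α : Type*} [Fintype α] [DecidableEq α]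

def pivotCoalition (i : α) (L T : Finset α) : Finset α :=
  {l ∈ univ.erase i | if l ∈ L then l ∈ T else i ∉ T}

theorem pivotCoalition_subset (i : α) (L T : Finset α) : pivotCoalition i L T ⊆ univ.erase i :=
  filter_subset _ _

theorem pivotCoalition_of_mem {i : α} {L T : Finset α} (hiL : i ∉ L) (hiT : i ∈ T) :
    pivotCoalition i L T = L ∩ T := by
  ext l
  by_cases hl : l = i
  · subst hl
    simp [pivotCoalition, hiL]
  · by_cases hlL : l ∈ L <;> simp [pivotCoalition, hl, hlL, hiT]

theorem pivotCoalition_compl (i : α) (L T : Finset α) :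
    pivotCoalition i L Tᶜ = univ.erase i \ pivotCoalition i L T := by
  ext l
  simp only [pivotCoalition, mem_filter, mem_sdiff, mem_compl]
  split_ifs <;> tauto

theorem card_filter_mem_inter_eq {i : α} {L S : Finset α} (hiL : i ∉ L) (hSL : S ⊆ L)
    (t : ℕ) :
    #{T | i ∈ T ∧ #T = #S + 1 + t ∧ L ∩ T = S} = (Fintype.card α - 1 - #L).choose t := by
  rw [show Fintype.card α - 1 - #L = #(insert i L)ᶜ by
    rw [card_compl, card_insert_of_notMem hiL]; omega, ← card_powersetCard]
  have hiS : i ∉ S := fun h => hiL (hSL h)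
  have hdisj {V : Finset α} (hV : V ⊆ (insert i L)ᶜ) : Disjoint (insert i S) V :=
    (subset_compl_iff_disjoint_left.mp hV).mono_left (insert_subset_insert i hSL)
  refine card_nbij' (fun T => T \ insert i S) (fun V => insert i S ∪ V) ?_ ?_ ?_ ?_
  · intro T hT
    simp only [mem_coe, mem_filter, mem_univ, true_and] at hT
    obtain ⟨hiT, hcard, rfl⟩ := hT
    have hsub : insert i (L ∩ T) ⊆ T := insert_subset hiT inter_subset_right
    rw [mem_coe, mem_powersetCard, card_sdiff_of_subset hsub, card_insert_of_notMem hiS, hcard]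
    refine ⟨fun x hx => ?_, by omega⟩
    simp only [mem_sdiff, mem_insert, mem_inter, not_or, not_and] at hx
    simp only [mem_compl, mem_insert, not_or]
    exact ⟨hx.2.1, fun hxL => hx.2.2 hxL hx.1⟩
  · intro V hV
    rw [mem_coe, mem_powersetCard] at hV
    simp only [mem_coe, mem_filter, mem_univ, true_and]
    refine ⟨mem_union_left _ (mem_insert_self i S), ?_, ?_⟩
    · rw [card_union_of_disjoint (hdisj hV.1), card_insert_of_notMem hiS, hV.2]
    · ext x
      have hxV : x ∈ V → x ∉ L := fun h hxL => by simpa [hxL] using hV.1 h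
      simp only [mem_inter, mem_union, mem_insert]
      constructor
      · rintro ⟨hxL, (rfl | hxS) | hxV'⟩
        · exact absurd hxL hiL
        · exact hxS
        · exact absurd hxL (hxV hxV')
      · exact fun hxS => ⟨hSL hxS, Or.inl (Or.inr hxS)⟩
  · intro T hT
    simp only [mem_coe, mem_filter, mem_univ, true_and] at hT
    obtain ⟨hiT, -, rfl⟩ := hT
    exact union_sdiff_of_subset (insert_subset hiT inter_subset_right)
  · intro V hV
    rw [mem_coe, mem_powersetCard] at hV
    exact union_sdiff_cancel_left (hdisj hV.1)

end Coalition

variable {n : ℕ}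

def lowset (π : Equiv.Perm (Fin n)) (i : Fin n) : Finset (Fin n) := {l | π l < π i}

theorem notMem_lowset (π : Equiv.Perm (Fin n)) (i : Fin n) : i ∉ lowset π i := by
  simp [lowset]

theorem card_lowset (π : Equiv.Perm (Fin n)) (i : Fin n) : #(lowset π i) = π i := by
  have : lowset π i = (Iio (π i)).map π.symm.toEmbedding := by
    ext l
    simp [lowset]
  rw [this, card_map, Fin.card_Iio]

theorem lowset_eq_iff {π : Equiv.Perm (Fin n)} {i : Fin n} {L : Finset (Fin n)} (hiL : i ∉ L)
    (hL : #L < n) :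
    lowset π i = L ↔ (compare · (⟨#L, hL⟩ : Fin n)) ∘ π =
      fun x => if x ∈ L then .lt else if x = i then .eq else .gt := by
  constructor
  · rintro rfl
    rw [← (Fin.ext (card_lowset π i).symm : π i = ⟨#(lowset π i), hL⟩)]
    ext x
    simp only [Function.comp_apply, lowset, mem_filter, mem_univ, true_and]
    split_ifs with hlt hxi
    · exact compare_lt_iff_lt.mpr hlt
    · simp [hxi]
    · exact compare_gt_iff_gt.mpr (lt_of_le_of_ne (not_lt.mp hlt)
        (π.injective.ne (Ne.symm hxi)))
  · intro h
    have hπi : π i = ⟨#L, hL⟩ := by simpa [hiL] using congrFun h i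
    ext x
    have hx := congrFun h x
    simp only [Function.comp_apply] at hx
    simp only [lowset, mem_filter, mem_univ, true_and, hπi, ← compare_lt_iff_lt, hx]
    split_ifs <;> simp_all

theorem card_filter_lowset_eq {i : Fin n} {L : Finset (Fin n)} (hiL : i ∉ L) :
    #{π : Equiv.Perm (Fin n) | lowset π i = L} = (#L)! * (n - 1 - #L)! := by
  have hL : #L < n := by simpa using card_lt_univ_of_notMem hiL
  simp_rw [lowset_eq_iff hiL hL]
  set p : Fin n := ⟨#L, hL⟩
  set f : Fin n → Ordering := fun x => if x ∈ L then .lt else if x = i then .eq else .gt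
  have hf_lt : Fintype.card {x // f x = .lt} = #L := by
    rw [Fintype.card_subtype]
    congr 1
    ext x
    simp only [f, mem_filter, mem_univ, true_and]
    split_ifs <;> simp_all
  have hf_eq : Fintype.card {x // f x = .eq} = 1 := by
    rw [Fintype.card_subtype, card_eq_one]
    refine ⟨i, ?_⟩
    ext x
    rcases eq_or_ne x i with rfl | hxi <;> simp [f, *]
  have hf_gt : Fintype.card {x // f x = .gt} = n - 1 - #L := by
    have hfilter : ({x | f x = .gt} : Finset _) = (insert i L)ᶜ := by
      ext x
      simp only [f, mem_filter, mem_univ, true_and, mem_compl, mem_insert]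
      split_ifs <;> simp_all
    rw [Fintype.card_subtype, hfilter, card_compl, card_insert_of_notMem hiL, Fintype.card_fin]
    omega
  have hg_lt : Fintype.card {y // compare y p = .lt} = #L := by
    simp [Fintype.card_subtype, compare_lt_iff_lt, filter_gt_eq_Iio, p]
  have hg_eq : Fintype.card {y // compare y p = .eq} = 1 := by
    simp
  have hg_gt : Fintype.card {y // compare y p = .gt} = n - 1 - #L := by
    simp [Fintype.card_subtype, compare_gt_iff_gt, filter_lt_eq_Ioi, p]
  rw [card_perm_comp_eq]
  · rw [show (univ : Finset Ordering) = {.lt, .eq, .gt} from rfl]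
    simp [hf_lt, hf_eq, hf_gt]
  · intro c
    cases c <;> simp only [hf_lt, hf_eq, hf_gt, hg_lt, hg_eq, hg_gt]

theorem fin_two_sub_eq_one_iff (x y : Fin 2) :
    ((x : ℕ) : ℤ) - ((y : ℕ) : ℤ) = 1 ↔ x = 1 ∧ y = 0 := by
  fin_cases x <;> fin_cases y <;> simp

section Prefix

variable (π : Equiv.Perm (Fin n)) (a : Fin n → Fin 2) (i : Fin n)

theorem val_lt_add_one_iff_of_ne {l : Fin n} (hl : l ≠ i) :
    (π l : ℕ) < π i + 1 ↔ (π l : ℕ) < π i := by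
  have : (π l : ℕ) ≠ π i := fun h => hl (π.injective (Fin.ext h))
  omega

theorem prefix_succ_eq {c : Fin 2} (hc : a i = c) :
    (fun l => if (π l : ℕ) < π i + 1 then a l else c) =
      fun l => if (π l : ℕ) < π i then a l else c := by
  funext l
  rcases eq_or_ne l i with rfl | hl
  · simp [hc]
  · simp [val_lt_add_one_iff_of_ne π i hl]

theorem pivotal_iff (v : (Fin n → Fin 2) → Fin 2) :
    Pivotal v π a i ↔
      v (charVec (insert i (pivotCoalition i (lowset π i) {l | a l = 1}))) = 1 ∧
        v (charVec (pivotCoalition i (lowset π i) {l | a l = 1})) = 0 := by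
  set S := pivotCoalition i (lowset π i) {l | a l = 1}
  rw [Pivotal, vbar, vbot, vbar, vbot]
  rcases (show a i = 0 ∨ a i = 1 by omega) with hai | hai
  · have htop : (fun l => if (π l : ℕ) < π i then a l else 1) = charVec (insert i S) := by
      funext l
      rcases eq_or_ne l i with rfl | hl
      · simp [charVec]
      · simp [S, charVec, pivotCoalition, lowset, hl, hai]
        split_ifs <;> omega
    have htop' : (fun l => if (π l : ℕ) < π i + 1 then a l else 1) = charVec S := by
      funext l
      rcases eq_or_ne l i with rfl | hl
      · simp [S, charVec, pivotCoalition, hai]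
      · simp [S, charVec, pivotCoalition, lowset, hl, hai, val_lt_add_one_iff_of_ne π i hl]
        split_ifs <;> omega
    rw [prefix_succ_eq π a i hai, htop, htop', sub_sub_sub_cancel_right, fin_two_sub_eq_one_iff]
  · have hbot : (fun l => if (π l : ℕ) < π i then a l else 0) = charVec S := by
      funext l
      rcases eq_or_ne l i with rfl | hl
      · simp [S, charVec, pivotCoalition]
      · simp [S, charVec, pivotCoalition, lowset, hl, hai]
        split_ifs <;> omega
    have hbot' : (fun l => if (π l : ℕ) < π i + 1 then a l else 0) = charVec (insert i S) := by
      funext l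
      rcases eq_or_ne l i with rfl | hl
      · simp [charVec, hai]
      · simp [S, charVec, pivotCoalition, lowset, hl, hai, val_lt_add_one_iff_of_ne π i hl]
        split_ifs <;> omega
    rw [prefix_succ_eq π a i hai, hbot, hbot', sub_sub_sub_cancel_left, fin_two_sub_eq_one_iff]

end Prefix

def pivotPairs (i : Fin n) (h : ℕ) (S : Finset (Fin n)) :
    Finset (Equiv.Perm (Fin n) × Finset (Fin n)) :=
  {p | #p.2 = h ∧ pivotCoalition i (lowset p.1 i) p.2 = S}

theorem filter_pivotPairs_lowset_sdiff_eq {i : Fin n} {S M : Finset (Fin n)} (hSM : Disjoint S M)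
    (h : ℕ) :
    {p ∈ {p ∈ pivotPairs i h S | i ∈ p.2} | lowset p.1 i \ S = M} =
      ({π | lowset π i = S ∪ M} : Finset _) ×ˢ
        ({T | i ∈ T ∧ #T = h ∧ (S ∪ M) ∩ T = S} : Finset _) := by
  ext ⟨π, T⟩
  simp only [pivotPairs, mem_filter, mem_univ, true_and, mem_product]
  constructor
  · rintro ⟨⟨⟨hT, hpc⟩, hiT⟩, rfl⟩
    rw [pivotCoalition_of_mem (notMem_lowset π i) hiT] at hpc
    have hSL : S ⊆ lowset π i := hpc ▸ inter_subset_left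
    rw [union_sdiff_of_subset hSL]
    exact ⟨rfl, hiT, hT, hpc⟩
  · rintro ⟨hL, hiT, hT, hST⟩
    rw [pivotCoalition_of_mem (notMem_lowset π i) hiT, hL]
    exact ⟨⟨⟨hT, hST⟩, hiT⟩, union_sdiff_cancel_left hSM⟩

theorem card_filter_mem_pivotPairs {i : Fin n} {S : Finset (Fin n)} (hiS : i ∉ S) (t : ℕ) :
    #{p ∈ pivotPairs i (#S + 1 + t) S | i ∈ p.2} =
      n.choose (#S + 1 + t) * ((#S)! * (n - 1 - #S)!) := by
  set R : Finset (Fin n) := (insert i S)ᶜ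
  have hR : #R = n - 1 - #S := by
    rw [card_compl, card_insert_of_notMem hiS, Fintype.card_fin]
    omega
  have hn : #S + 1 ≤ n := by
    simpa [card_insert_of_notMem hiS] using card_le_univ (insert i S)
  have hmaps : ∀ p ∈ {p ∈ pivotPairs i (#S + 1 + t) S | i ∈ p.2},
      lowset p.1 i \ S ∈ R.powerset := by
    intro p _
    rw [mem_powerset, subset_compl_iff_disjoint_left, disjoint_insert_left]
    exact ⟨fun h => notMem_lowset p.1 i (mem_sdiff.mp h).1, disjoint_sdiff⟩
  have hfiber : ∀ M ∈ R.powerset,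
      #{p ∈ {p ∈ pivotPairs i (#S + 1 + t) S | i ∈ p.2} | lowset p.1 i \ S = M} =
        (#S + #M)! * (n - 1 - (#S + #M))! * (n - 1 - (#S + #M)).choose t := by
    intro M hM
    rw [mem_powerset, subset_compl_iff_disjoint_left, disjoint_insert_left] at hM
    have hiSM : i ∉ S ∪ M := by simp [hiS, hM.1]
    have hvotes := card_filter_mem_inter_eq hiSM subset_union_left t
    rw [Fintype.card_fin] at hvotes
    rw [filter_pivotPairs_lowset_sdiff_eq hM.2, card_product, card_filter_lowset_eq hiSM, hvotes,
      card_union_of_disjoint hM.2]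
  rw [card_eq_sum_card_fiberwise hmaps, sum_congr rfl hfiber,
    sum_powerset_apply_card
      (fun m => (#S + m)! * (n - 1 - (#S + m))! * (n - 1 - (#S + m)).choose t)]
  simp_rw [smul_eq_mul, show ∀ m, n - 1 - (#S + m) = #R - m from fun m => by omega]
  rw [sum_range_choose_mul_factorial_mul_choose, hR, show n - 1 - #S + #S + 1 = n by omega,
    add_right_comm]

theorem card_filter_mem_pivotPairs_of_le {i : Fin n} {S : Finset (Fin n)} {h : ℕ}
    (hh : h ≤ #S) : #{p ∈ pivotPairs i h S | i ∈ p.2} = 0 := by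
  rw [Finset.card_eq_zero, filter_eq_empty_iff]
  rintro ⟨π, T⟩ hp hiT
  simp only [pivotPairs, mem_filter, mem_univ, true_and] at hp
  obtain ⟨hT, hpc⟩ := hp
  rw [pivotCoalition_of_mem (notMem_lowset π i) hiT] at hpc
  have hiS : i ∉ S := hpc ▸ fun hi => notMem_lowset π i (mem_inter.mp hi).1
  have hST : S ⊂ T := Finset.ssubset_iff_subset_ne.mpr
    ⟨hpc ▸ inter_subset_right, fun hS => hiS (hS ▸ hiT)⟩
  exact absurd (card_lt_card hST) (by omega)

theorem card_filter_notMem_pivotPairs {i : Fin n} {S : Finset (Fin n)} (hS : S ⊆ univ.erase i)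
    {h : ℕ} (hh : h ≤ n) :
    #{p ∈ pivotPairs i h S | i ∉ p.2} =
      #{p ∈ pivotPairs i (n - h) (univ.erase i \ S) | i ∈ p.2} := by
  refine card_equiv ((Equiv.refl _).prodCongr (compl_involutive.toPerm _)) fun ⟨π, T⟩ => ?_
  have hT : #T ≤ n := card_le_univ T |>.trans_eq (Fintype.card_fin n)
  simp only [pivotPairs, mem_filter, mem_univ, true_and, Equiv.prodCongr_apply, Prod.map,
    Equiv.refl_apply, Function.Involutive.coe_toPerm, mem_compl, card_compl, Fintype.card_fin,
    pivotCoalition_compl]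
  refine and_congr_left fun _ => and_congr (by omega) ⟨fun h => h ▸ rfl, fun h => ?_⟩
  rw [← Finset.sdiff_sdiff_eq_self (pivotCoalition_subset i _ T), h,
    Finset.sdiff_sdiff_eq_self hS]

theorem card_pivotPairs {i : Fin n} {S : Finset (Fin n)} (hiS : i ∉ S) {h : ℕ} (hh : h ≤ n) :
    #(pivotPairs i h S) = n.choose h * ((#S)! * (n - 1 - #S)!) := by
  have hS : S ⊆ univ.erase i := fun x hx =>
    mem_erase.mpr ⟨ne_of_mem_of_not_mem hx hiS, mem_univ x⟩
  have hcompl : #(univ.erase i \ S) = n - 1 - #S := by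
    rw [card_sdiff_of_subset hS, card_erase_of_mem (mem_univ i), Finset.card_univ,
      Fintype.card_fin]
  rw [← card_filter_add_card_filter_not (fun p => i ∈ p.2), card_filter_notMem_pivotPairs hS hh]
  rcases lt_or_ge #S h with hlt | hle
  · obtain ⟨t, rfl⟩ : ∃ t, h = #S + 1 + t := ⟨h - #S - 1, by omega⟩
    rw [card_filter_mem_pivotPairs hiS t, card_filter_mem_pivotPairs_of_le (by omega), add_zero]
  · have hSn : #S < n := by simpa using card_lt_univ_of_notMem hiS
    have hswap := card_filter_mem_pivotPairs (i := i) (S := univ.erase i \ S) (by simp) (#S - h)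
    rw [hcompl, show n - 1 - #S + 1 + (#S - h) = n - h by omega, choose_symm hh,
      show n - 1 - (n - 1 - #S) = #S by omega] at hswap
    rw [card_filter_mem_pivotPairs_of_le hle, zero_add, hswap, mul_comm (n - 1 - #S)!]

def charVecEquiv : Finset (Fin n) ≃ (Fin n → Fin 2) where
  toFun := charVec
  invFun a := {l | a l = 1}
  left_inv T := by
    ext l
    simp [charVec]
  right_inv a := by
    funext l
    simp only [charVec, mem_filter, mem_univ, true_and]
    split_ifs <;> omega

theorem swing_count_general {n : ℕ} (v : (Fin n → Fin 2) → Fin 2)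
    (i : Fin n) (h : ℕ) (hh : h ≤ n) :
    n.choose h *
      ∑ S ∈ (Finset.univ : Finset (Finset (Fin n))).filter
          (fun S => i ∉ S ∧ v (charVec (insert i S)) = 1 ∧ v (charVec S) = 0),
        S.card.factorial * (n - 1 - S.card).factorial =
    ((Finset.univ : Finset (Equiv.Perm (Fin n) × (Fin n → Fin 2))).filter
        (fun pa => (Finset.univ.filter (fun l => pa.2 l = 1)).card = h ∧
          Pivotal v pa.1 pa.2 i)).card := by
  set coalition := fun pa : Equiv.Perm (Fin n) × (Fin n → Fin 2) =>
    pivotCoalition i (lowset pa.1 i) {l | pa.2 l = 1}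
  have hmaps : ∀ pa ∈ ({pa : Equiv.Perm (Fin n) × (Fin n → Fin 2) |
        #{l | pa.2 l = 1} = h ∧ Pivotal v pa.1 pa.2 i} : Finset _),
      coalition pa ∈ ({S | i ∉ S ∧ v (charVec (insert i S)) = 1 ∧ v (charVec S) = 0} :
        Finset _) := by
    intro pa hpa
    rw [mem_filter, pivotal_iff] at hpa
    exact mem_filter.mpr ⟨mem_univ _,
      fun hi => (mem_erase.mp (pivotCoalition_subset _ _ _ hi)).1 rfl, hpa.2.2⟩
  rw [card_eq_sum_card_fiberwise hmaps, mul_sum]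
  refine sum_congr rfl fun S hS => ?_
  rw [mem_filter] at hS
  rw [← card_pivotPairs hS.2.1 hh, filter_filter]
  refine (card_equiv ((Equiv.refl _).prodCongr charVecEquiv.symm) fun ⟨π, a⟩ => ?_).symm
  simp only [pivotPairs, mem_filter, mem_univ, true_and, Equiv.prodCongr_apply, Prod.map,
    Equiv.refl_apply, charVecEquiv, Equiv.coe_fn_symm_mk, pivotal_iff, coalition]
  constructor
  · rintro ⟨⟨hcard, -⟩, hc⟩
    exact ⟨hcard, hc⟩
  · rintro ⟨hcard, hc⟩
    exact ⟨⟨hcard, hc ▸ hS.2.2⟩, hc⟩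

/-- Lemma 4.5: `C(n,h) · ∑_{S an i-swing} |S|!·(n−1−|S|)!` equals the number of pairs
`(π, a)` with exactly `h` votes equal to `2` for which player `i` is pivotal. -/
theorem swing_count {n : ℕ} (v : (Fin n → Fin 2) → Fin 2)
    (hmono : Monotone v) (hsurj : Function.Surjective v) (i : Fin n) (h : ℕ) (hh : h ≤ n) :
    n.choose h *
      ∑ S ∈ (Finset.univ : Finset (Finset (Fin n))).filter
          (fun S => i ∉ S ∧ v (charVec (insert i S)) = 1 ∧ v (charVec S) = 0),
        S.card.factorial * (n - 1 - S.card).factorial =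
    ((Finset.univ : Finset (Equiv.Perm (Fin n) × (Fin n → Fin 2))).filter
        (fun pa => (Finset.univ.filter (fun l => pa.2 l = 1)).card = h ∧
          Pivotal v pa.1 pa.2 i)).card :=
  swing_count_general v i h hh
end

section
/- Let ṽ be a simple game on n players and v the corresponding monotone (2,2) game. Then the Shapley-Shubik index of player i equals (1/n!) times the number of permutations π such that player i is pivotal in the roll-call where all players vote 2 ('yes'), i.e., φ̃_i(ṽ) = (1/n!)·∑_π [(v̄_{π,p-1}(a) − v̲_{π,p-1}(a)) − (v̄_{π,p}(a) − v̲_{π,p}(a))] with a = (2,…,2) and p = π^{-1}(i); and the same holds with a = (1,…,1). -/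
open Finset

/-!
Rank the players by a permutation `π`. When everybody votes yes, `vbar` is constant and `vbot`
at height `h` is `v` of the coalition of the first `h` players, so the summand for `π` is the
marginal contribution of `i` to the set of its predecessors; when everybody votes no it is,
symmetrically, the marginal contribution of `i` to its successors, and reversing the ranking
turns successors into predecessors. Both sides are then the permutation form of the
Shapley value: the rankings in which `S ∌ i` is exactly the set of predecessors of `i` are those
sending `S`, `i` and the remaining players onto the positions before, at and after `#S`, and
there are `#S! * (n - 1 - #S)!` of them.
-/

theorem Fintype.card_perm_comp_eq_prod {α ι : Type*} [Fintype α] [DecidableEq α] [Fintype ι]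
    [DecidableEq ι] (f g : α → ι)
    (hfg : ∀ c, Fintype.card {a // f a = c} = Fintype.card {a // g a = c}) :
    Fintype.card {σ : Equiv.Perm α // f ∘ σ = g} =
      ∏ c, (Fintype.card {a // f a = c}).factorial := by
  -- Matching fibers give one solution `σ₀`; the solutions form the coset `stabilizer f * σ₀`.
  let σ₀ : Equiv.Perm α := Equiv.ofFiberEquiv fun c => Fintype.equivOfCardEq (hfg c).symm
  have hσ₀ : f ∘ σ₀ = g := funext (Equiv.ofFiberEquiv_map _)
  rw [← DomMulAct.stabilizer_card f]
  refine Fintype.card_congr (Equiv.subtypeEquiv (Equiv.mulRight σ₀⁻¹) fun σ => ?_)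
  rw [← hσ₀]
  constructor
  · intro h; ext a; simpa using congrFun h (σ₀.symm a)
  · intro h; ext a; simpa using congrFun h (σ₀ a)

section

variable {n : ℕ}

def predecessors (π : Equiv.Perm (Fin n)) (i : Fin n) : Finset (Fin n) := {l | π l < π i}

def successors (π : Equiv.Perm (Fin n)) (i : Fin n) : Finset (Fin n) := {l | π i < π l}

theorem card_predecessors (π : Equiv.Perm (Fin n)) (i : Fin n) :
    #(predecessors π i) = π i := by
  have : predecessors π i = (Iio (π i)).map π.symm.toEmbedding := by
    ext l; simp [predecessors]
  rw [this, card_map, Fin.card_Iio]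

def pivotClass (i : Fin n) (S : Finset (Fin n)) (l : Fin n) : Ordering :=
  if l ∈ S then .lt else if l = i then .eq else .gt

theorem predecessors_eq_iff {π : Equiv.Perm (Fin n)} {i : Fin n} {S : Finset (Fin n)}
    {p : Fin n} (hp : (p : ℕ) = #S) (hiS : i ∉ S) :
    predecessors π i = S ↔ (compare · p) ∘ π = pivotClass i S := by
  constructor
  · rintro rfl
    have hpi : π i = p := Fin.ext (by rw [hp, card_predecessors])
    ext l
    simp only [Function.comp_apply, pivotClass, predecessors, mem_filter, mem_univ, true_and,
      ← hpi]
    split_ifs with hl hli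
    · exact compare_lt_iff_lt.mpr hl
    · exact compare_eq_iff_eq.mpr (congrArg π hli)
    · exact compare_gt_iff_gt.mpr (lt_of_le_of_ne (not_lt.mp hl) (π.injective.ne (Ne.symm hli)))
  · intro h
    have hl : ∀ l, compare (π l) p = pivotClass i S l := congrFun h
    have hpi : π i = p := by
      simpa [pivotClass, hiS] using hl i
    ext l
    have := hl l
    simp only [predecessors, mem_filter, mem_univ, true_and, hpi, ← compare_lt_iff_lt, this,
      pivotClass]
    split_ifs <;> simp_all

theorem card_compare_fiber_eq_card_pivotClass_fiber {i p : Fin n} {S : Finset (Fin n)}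
    (hp : (p : ℕ) = #S) (hiS : i ∉ S) (c : Ordering) :
    Fintype.card {m // compare m p = c} = Fintype.card {l // pivotClass i S l = c} := by
  cases c
  · simp [Fintype.card_subtype, compare_lt_iff_lt, filter_gt_eq_Iio, pivotClass, hp]
  · have : ({l | pivotClass i S l = .eq} : Finset (Fin n)) = {i} := by
      ext l; by_cases l = i <;> simp_all [pivotClass]
    rw [Fintype.card_subtype, Fintype.card_subtype, this]
    simp [filter_eq']
  · have : ({l | pivotClass i S l = .gt} : Finset (Fin n)) = (insert i S)ᶜ := by
      ext l; by_cases l = i <;> simp_all [pivotClass]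
    rw [Fintype.card_subtype, Fintype.card_subtype, this, card_compl, card_insert_of_notMem hiS]
    simp only [compare_gt_iff_gt, filter_lt_eq_Ioi, Fin.card_Ioi, hp, Fintype.card_fin]
    omega

theorem card_filter_predecessors_eq {i : Fin n} {S : Finset (Fin n)} (hiS : i ∉ S) :
    #{π : Equiv.Perm (Fin n) | predecessors π i = S} =
      (#S).factorial * (n - 1 - #S).factorial := by
  have hS : #S < n := by
    have := card_le_univ (insert i S)
    rw [card_insert_of_notMem hiS, Fintype.card_fin] at this
    omega
  let p : Fin n := ⟨#S, hS⟩
  have huniv : (univ : Finset Ordering) = {.lt, .eq, .gt} := by decide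
  rw [filter_congr fun π _ => predecessors_eq_iff (p := p) rfl hiS, ← Fintype.card_subtype,
    Fintype.card_perm_comp_eq_prod _ _ (card_compare_fiber_eq_card_pivotClass_fiber rfl hiS),
    huniv]
  simp [Fintype.card_subtype, compare_lt_iff_lt, compare_gt_iff_gt, filter_gt_eq_Iio,
    filter_eq', filter_lt_eq_Ioi, p]

theorem sum_perm_predecessors {M : Type*} [AddCommMonoid M] (i : Fin n)
    (F : Finset (Fin n) → M) :
    ∑ π : Equiv.Perm (Fin n), F (predecessors π i) =
      ∑ S with i ∉ S, ((#S).factorial * (n - 1 - #S).factorial) • F S := by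
  rw [← sum_fiberwise_of_maps_to' (t := {S | i ∉ S}) (by simp [predecessors])]
  refine sum_congr rfl fun S hS => ?_
  rw [sum_const, card_filter_predecessors_eq (mem_filter.1 hS).2]

theorem predecessors_revPerm_mul (π : Equiv.Perm (Fin n)) (i : Fin n) :
    predecessors (Fin.revPerm * π) i = successors π i := by
  ext l; simp [predecessors, successors]

theorem sum_perm_successors {M : Type*} [AddCommMonoid M] (i : Fin n)
    (F : Finset (Fin n) → M) :
    ∑ π : Equiv.Perm (Fin n), F (successors π i) =
      ∑ π : Equiv.Perm (Fin n), F (predecessors π i) :=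
  Fintype.sum_equiv (Equiv.mulLeft Fin.revPerm) _ _ fun π => by
    rw [Equiv.coe_mulLeft, predecessors_revPerm_mul]

section RollCalls

variable (v : (Fin n → Fin 2) → Fin 2) (π : Equiv.Perm (Fin n)) (i : Fin n)

theorem vbar_const_one (h : ℕ) : vbar v π (fun _ => 1) h = v (fun _ => 1) := by
  simp [vbar]

theorem vbot_const_zero (h : ℕ) : vbot v π (fun _ => 0) h = v (fun _ => 0) := by
  simp [vbot]

theorem vbot_const_one_self :
    vbot v π (fun _ => 1) (π i) = v (charVec (predecessors π i)) := by
  unfold vbot charVec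
  congr 1; funext l
  simp [predecessors]

theorem vbot_const_one_succ :
    vbot v π (fun _ => 1) (π i + 1) = v (charVec (insert i (predecessors π i))) := by
  unfold vbot charVec
  congr 1; funext l
  simp [predecessors, le_iff_eq_or_lt, Fin.val_inj]

theorem vbar_const_zero_self :
    vbar v π (fun _ => 0) (π i) = v (charVec (insert i (successors π i))) := by
  unfold vbar charVec
  congr 1; funext l
  simp only [successors, mem_insert, mem_filter, mem_univ, true_and, Fin.val_fin_lt]
  have := π.injective.eq_iff (a := l) (b := i)
  split_ifs <;> grind

theorem vbar_const_zero_succ :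
    vbar v π (fun _ => 0) (π i + 1) = v (charVec (successors π i)) := by
  unfold vbar charVec
  congr 1; funext l
  by_cases h : π l ≤ π i <;> simp [successors, h]

end RollCalls

end

theorem shapley_shubik_extreme_roll_calls_general {n : ℕ} (v : (Fin n → Fin 2) → Fin 2)
    (i : Fin n) :
    ((1 / (n.factorial : ℝ)) *
        ∑ S ∈ (Finset.univ : Finset (Finset (Fin n))).filter (fun S => i ∉ S),
          (S.card.factorial : ℝ) * ((n - 1 - S.card).factorial : ℝ) *
            (((v (charVec (insert i S)) : ℕ) : ℝ) - ((v (charVec S) : ℕ) : ℝ)) =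
      (1 / (n.factorial : ℝ)) *
        ∑ π : Equiv.Perm (Fin n),
          ((((vbar v π (fun _ => 1) (π i) : ℕ) : ℝ) - ((vbot v π (fun _ => 1) (π i) : ℕ) : ℝ)) -
            (((vbar v π (fun _ => 1) ((π i : ℕ) + 1) : ℕ) : ℝ) -
              ((vbot v π (fun _ => 1) ((π i : ℕ) + 1) : ℕ) : ℝ)))) ∧
    ((1 / (n.factorial : ℝ)) *
        ∑ S ∈ (Finset.univ : Finset (Finset (Fin n))).filter (fun S => i ∉ S),
          (S.card.factorial : ℝ) * ((n - 1 - S.card).factorial : ℝ) *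
            (((v (charVec (insert i S)) : ℕ) : ℝ) - ((v (charVec S) : ℕ) : ℝ)) =
      (1 / (n.factorial : ℝ)) *
        ∑ π : Equiv.Perm (Fin n),
          ((((vbar v π (fun _ => 0) (π i) : ℕ) : ℝ) - ((vbot v π (fun _ => 0) (π i) : ℕ) : ℝ)) -
            (((vbar v π (fun _ => 0) ((π i : ℕ) + 1) : ℕ) : ℝ) -
              ((vbot v π (fun _ => 0) ((π i : ℕ) + 1) : ℕ) : ℝ)))) := by
  set F : Finset (Fin n) → ℝ := fun S =>
    ((v (charVec (insert i S)) : ℕ) : ℝ) - ((v (charVec S) : ℕ) : ℝ)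
  have hShapley : ∑ S with i ∉ S, ((#S).factorial : ℝ) * ((n - 1 - #S).factorial : ℝ) * F S =
      ∑ π : Equiv.Perm (Fin n), F (predecessors π i) := by
    simp [sum_perm_predecessors, nsmul_eq_mul]
  refine ⟨?_, ?_⟩
  · rw [hShapley]
    congr 1
    refine sum_congr rfl fun π _ => ?_
    rw [vbar_const_one, vbar_const_one, vbot_const_one_self, vbot_const_one_succ]
    ring
  · rw [hShapley, ← sum_perm_successors]
    congr 1
    refine sum_congr rfl fun π _ => ?_
    rw [vbot_const_zero, vbot_const_zero, vbar_const_zero_self, vbar_const_zero_succ]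
    ring

/-- Lemma 4.3: the Shapley-Shubik index of player `i` equals `1/n!` times the number of
orderings in which `i` is pivotal in the roll-call where all players vote `2` ("yes"),
and likewise where all players vote `1` ("no"). -/
theorem shapley_shubik_extreme_roll_calls {n : ℕ} (v : (Fin n → Fin 2) → Fin 2)
    (hmono : Monotone v) (hsurj : Function.Surjective v) (i : Fin n) :
    ((1 / (n.factorial : ℝ)) *
        ∑ S ∈ (Finset.univ : Finset (Finset (Fin n))).filter (fun S => i ∉ S),
          (S.card.factorial : ℝ) * ((n - 1 - S.card).factorial : ℝ) *
            (((v (charVec (insert i S)) : ℕ) : ℝ) - ((v (charVec S) : ℕ) : ℝ)) =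
      (1 / (n.factorial : ℝ)) *
        ∑ π : Equiv.Perm (Fin n),
          ((((vbar v π (fun _ => 1) (π i) : ℕ) : ℝ) - ((vbot v π (fun _ => 1) (π i) : ℕ) : ℝ)) -
            (((vbar v π (fun _ => 1) ((π i : ℕ) + 1) : ℕ) : ℝ) -
              ((vbot v π (fun _ => 1) ((π i : ℕ) + 1) : ℕ) : ℝ)))) ∧
    ((1 / (n.factorial : ℝ)) *
        ∑ S ∈ (Finset.univ : Finset (Finset (Fin n))).filter (fun S => i ∉ S),
          (S.card.factorial : ℝ) * ((n - 1 - S.card).factorial : ℝ) *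
            (((v (charVec (insert i S)) : ℕ) : ℝ) - ((v (charVec S) : ℕ) : ℝ)) =
      (1 / (n.factorial : ℝ)) *
        ∑ π : Equiv.Perm (Fin n),
          ((((vbar v π (fun _ => 0) (π i) : ℕ) : ℝ) - ((vbot v π (fun _ => 0) (π i) : ℕ) : ℝ)) -
            (((vbar v π (fun _ => 0) ((π i : ℕ) + 1) : ℕ) : ℝ) -
              ((vbot v π (fun _ => 0) ((π i : ℕ) + 1) : ℕ) : ℝ)))) :=
  shapley_shubik_extreme_roll_calls_general v i
end

section
/- If u and w are monotone maps from J^n to K (with J, K finite linearly ordered sets) that are both output-rough, then u ∨ w (pointwise max) and u ∧ w (pointwise min) are output-rough; moreover if u and w are surjective and nontrivial, so are u ∨ w and u ∧ w. -/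
/-!
The reachable set of `max u w` always lies in `[max α₁ α₂, max β₁ β₂]`. Conversely, for `γ` in
that range with, say, `γ ≤ β₁`, pick a completion `a'` with `u a' = γ`. If `w a' > γ`, lower `a'`
towards a completion `s` with `w s = α₂ ≤ γ`: along the box `[a' ⊓ s, a']` the monotone map `w`
crosses `γ`, and output-roughness applied to one free coordinate at a time yields a point `d` of
the box with `w d = γ`, while `u d ≤ u a' = γ`. The minimum is dual, and surjectivity is the case
where no player is fixed.
-/

open Finset

/-- The set of still-possible outcomes after the first `h` players (according to `π`,
player `l` being called at position `π l`, 0-indexed) have declared votes from `a`. -/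
def reach {n : ℕ} {J : Type*} [Fintype J] [DecidableEq J]
    (v : (Fin n → J) → ℤ) (π : Equiv.Perm (Fin n)) (a : Fin n → J) (h : ℕ) : Finset ℤ :=
  (Finset.univ.filter (fun a' : Fin n → J => ∀ l, (π l : ℕ) < h → a' l = a l)).image v

/-- A game with integer output values is output-rough if every reachable-outcome set is
an integer interval. -/
def OutputRough {n : ℕ} {J : Type*} [Fintype J] [DecidableEq J]
    (v : (Fin n → J) → ℤ) : Prop :=
  ∀ (a : Fin n → J) (π : Equiv.Perm (Fin n)) (h : ℕ),
    ∃ α β : ℤ, reach v π a h = Finset.Icc α β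

section

variable {n : ℕ} {J : Type*} [Fintype J]

section DecidableEq

variable [DecidableEq J]

lemma mem_reach {v : (Fin n → J) → ℤ} {π : Equiv.Perm (Fin n)} {a : Fin n → J} {h : ℕ}
    {γ : ℤ} : γ ∈ reach v π a h ↔ ∃ a', (∀ l, (π l : ℕ) < h → a' l = a l) ∧ v a' = γ := by
  simp [reach]

lemma reach_zero (v : (Fin n → J) → ℤ) (π : Equiv.Perm (Fin n)) (a : Fin n → J) :
    reach v π a 0 = univ.image v := by
  simp [reach]

lemma OutputRough.exists_eq_of_le_of_le {v : (Fin n → J) → ℤ} (hv : OutputRough v)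
    {π : Equiv.Perm (Fin n)} {a x y : Fin n → J} {h : ℕ}
    (hx : ∀ l, (π l : ℕ) < h → x l = a l) (hy : ∀ l, (π l : ℕ) < h → y l = a l)
    {γ : ℤ} (hxγ : v x ≤ γ) (hγy : γ ≤ v y) :
    ∃ d, (∀ l, (π l : ℕ) < h → d l = a l) ∧ v d = γ := by
  obtain ⟨α, β, hI⟩ := hv a π h
  have hvx : v x ∈ reach v π a h := mem_reach.2 ⟨x, hx, rfl⟩
  have hvy : v y ∈ reach v π a h := mem_reach.2 ⟨y, hy, rfl⟩
  rw [hI, mem_Icc] at hvx hvy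
  exact mem_reach.1 (hI ▸ mem_Icc.2 ⟨hvx.1.trans hxγ, hγy.trans hvy.2⟩)

lemma val_swap_lt_pred_iff (l m : Fin n) :
    ((Equiv.swap l ⟨n - 1, Nat.sub_one_lt_of_lt l.isLt⟩ m : Fin n) : ℕ) < n - 1 ↔ m ≠ l := by
  have := l.isLt
  have := m.isLt
  rw [Equiv.swap_apply_def]
  split_ifs <;> simp only [ne_eq, Fin.ext_iff] at * <;> omega

/-- Freeing the single coordinate `l` (calling its player last) turns output-roughness into an
intermediate value property along that coordinate. -/
lemma OutputRough.exists_eq_of_eq_off {v : (Fin n → J) → ℤ} (hv : OutputRough v) {l : Fin n}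
    {x y : Fin n → J} (hxy : ∀ m, m ≠ l → y m = x m) {γ : ℤ} (hxγ : v x ≤ γ) (hγy : γ ≤ v y) :
    ∃ d, (∀ m, m ≠ l → d m = x m) ∧ v d = γ := by
  simp_rw [← val_swap_lt_pred_iff l] at hxy ⊢
  exact hv.exists_eq_of_le_of_le (fun _ _ => rfl) hxy hxγ hγy

end DecidableEq

variable [LinearOrder J] {u w : (Fin n → J) → ℤ}

lemma exists_mem_Icc_eq_of_eq_off (hwm : Monotone w) (hwr : OutputRough w) {l : Fin n}
    {x y : Fin n → J} (hxy : x ≤ y) (hoff : ∀ m, m ≠ l → y m = x m) {γ : ℤ}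
    (hxγ : w x ≤ γ) (hγy : γ ≤ w y) : ∃ d ∈ Set.Icc x y, w d = γ := by
  obtain ⟨d, hd, rfl⟩ := hwr.exists_eq_of_eq_off hoff hxγ hγy
  have hle_of : ∀ z : Fin n → J, d l ≤ z l → (∀ m, m ≠ l → x m ≤ z m) → d ≤ z := fun z hl hz m =>
    (eq_or_ne m l).elim (fun h => h ▸ hl) fun h => (hd m h).symm ▸ hz m h
  have hge_of : ∀ z : Fin n → J, z l ≤ d l → (∀ m, m ≠ l → z m ≤ x m) → z ≤ d := fun z hl hz m =>
    (eq_or_ne m l).elim (fun h => h ▸ hl) fun h => (hd m h).symm ▸ hz m h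
  rcases le_total (d l) (x l) with hdx | hxd
  · exact ⟨x, ⟨le_rfl, hxy⟩, le_antisymm hxγ (hwm (hle_of x hdx fun _ _ => le_rfl))⟩
  rcases le_total (y l) (d l) with hyd | hdy
  · exact ⟨y, ⟨hxy, le_rfl⟩, le_antisymm (hwm (hge_of y hyd fun m hm => (hoff m hm).le)) hγy⟩
  exact ⟨d, ⟨hge_of x hxd fun _ _ => le_rfl, hle_of y hdy fun m hm => (hoff m hm).ge⟩, rfl⟩

/-- Discrete intermediate value theorem: walk from `x` to `y` one coordinate at a time. -/
lemma exists_mem_Icc_eq (hwm : Monotone w) (hwr : OutputRough w) {x y : Fin n → J}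
    (hxy : x ≤ y) {γ : ℤ} (hxγ : w x ≤ γ) (hγy : γ ≤ w y) : ∃ d ∈ Set.Icc x y, w d = γ := by
  classical
  suffices ∀ s : Finset (Fin n), ∀ x, x ≤ y → (∀ m ∉ s, x m = y m) → w x ≤ γ →
      ∃ d ∈ Set.Icc x y, w d = γ from this univ x hxy (by simp) hxγ
  intro s
  induction s using Finset.induction_on with
  | empty =>
    intro x _ hxy hxγ
    obtain rfl : x = y := funext fun m => hxy m (notMem_empty m)
    exact ⟨x, ⟨le_rfl, le_rfl⟩, le_antisymm hxγ hγy⟩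
  | insert l s _ ih =>
    intro x hxy hoff hxγ
    set z := Function.update x l (y l)
    have hxz : x ≤ z := le_update_self_iff.2 (hxy l)
    have hzy : z ≤ y := update_le_iff.2 ⟨le_rfl, fun m _ => hxy m⟩
    rcases le_total γ (w z) with hγz | hzγ
    · obtain ⟨d, hd, rfl⟩ :=
        exists_mem_Icc_eq_of_eq_off hwm hwr hxz (fun m hm => Function.update_of_ne hm _ _) hxγ hγz
      exact ⟨d, ⟨hd.1, hd.2.trans hzy⟩, rfl⟩
    · have hoff' : ∀ m ∉ s, z m = y m := fun m hm => by
        rcases eq_or_ne m l with rfl | hml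
        · simp [z]
        · simp only [z, Function.update_of_ne hml]
          exact hoff m (by simp [hml, hm])
      obtain ⟨d, hd, rfl⟩ := ih z hzy hoff' hzγ
      exact ⟨d, ⟨hxz.trans hd.1, hd.2⟩, rfl⟩

lemma exists_max_eq (hum : Monotone u) (hwm : Monotone w) (hwr : OutputRough w)
    {P : Fin n → Prop} {a a' s : Fin n → J} (ha' : ∀ l, P l → a' l = a l)
    (hs : ∀ l, P l → s l = a l) {γ : ℤ} (hua' : u a' = γ) (hws : w s ≤ γ) :
    ∃ d, (∀ l, P l → d l = a l) ∧ max (u d) (w d) = γ := by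
  rcases le_total (w a') γ with hwa | hγa
  · exact ⟨a', ha', by rw [hua', max_eq_left hwa]⟩
  obtain ⟨d, ⟨hbd, hda⟩, hwd⟩ :=
    exists_mem_Icc_eq hwm hwr inf_le_left ((hwm inf_le_right).trans hws) hγa
  refine ⟨d, fun l hl => le_antisymm ((hda l).trans (ha' l hl).le) ?_, ?_⟩
  · simpa [ha' l hl, hs l hl] using hbd l
  · rw [hwd, max_eq_right (hua' ▸ hum hda)]

lemma exists_min_eq (hum : Monotone u) (hwm : Monotone w) (hwr : OutputRough w)
    {P : Fin n → Prop} {a a' s : Fin n → J} (ha' : ∀ l, P l → a' l = a l)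
    (hs : ∀ l, P l → s l = a l) {γ : ℤ} (hua' : u a' = γ) (hws : γ ≤ w s) :
    ∃ d, (∀ l, P l → d l = a l) ∧ min (u d) (w d) = γ := by
  rcases le_total γ (w a') with hwa | hγa
  · exact ⟨a', ha', by rw [hua', min_eq_left hwa]⟩
  obtain ⟨d, ⟨had, hdb⟩, hwd⟩ :=
    exists_mem_Icc_eq hwm hwr le_sup_left hγa (hws.trans (hwm le_sup_right))
  refine ⟨d, fun l hl => le_antisymm ?_ ((ha' l hl).ge.trans (had l)), ?_⟩
  · simpa [ha' l hl, hs l hl] using hdb l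
  · rw [hwd, min_eq_right (hua' ▸ hum had)]

lemma le_of_reach_eq_Icc {v : (Fin n → J) → ℤ} {π : Equiv.Perm (Fin n)} {a : Fin n → J} {h : ℕ}
    {α β : ℤ} (hI : reach v π a h = Icc α β) : α ≤ β :=
  nonempty_Icc.1 (hI ▸ ⟨v a, mem_reach.2 ⟨a, fun _ _ => rfl, rfl⟩⟩)

section Reach

variable {π : Equiv.Perm (Fin n)} {a : Fin n → J} {h : ℕ} {α₁ β₁ α₂ β₂ : ℤ}

lemma reach_max (hum : Monotone u) (hwm : Monotone w) (hur : OutputRough u)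
    (hwr : OutputRough w) (h1 : reach u π a h = Icc α₁ β₁) (h2 : reach w π a h = Icc α₂ β₂) :
    reach (fun x => max (u x) (w x)) π a h = Icc (max α₁ α₂) (max β₁ β₂) := by
  wlog hβ : β₂ ≤ β₁ generalizing u w α₁ β₁ α₂ β₂
  · simpa only [max_comm] using this hwm hum hwr hur h2 h1 (le_of_not_ge hβ)
  ext γ
  constructor
  · intro hγ
    obtain ⟨a', ha', rfl⟩ := mem_reach.1 hγ
    have hu := mem_Icc.1 (h1 ▸ mem_reach.2 ⟨a', ha', rfl⟩)
    have hw := mem_Icc.1 (h2 ▸ mem_reach.2 ⟨a', ha', rfl⟩)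
    exact mem_Icc.2 ⟨by omega, by omega⟩
  · intro hγ
    rw [mem_Icc, max_eq_left hβ, max_le_iff] at hγ
    obtain ⟨a', ha', hua'⟩ := mem_reach.1 (h1 ▸ mem_Icc.2 ⟨hγ.1.1, hγ.2⟩)
    obtain ⟨s, hs, hws⟩ := mem_reach.1 (h2 ▸ left_mem_Icc.2 (le_of_reach_eq_Icc h2))
    exact mem_reach.2 (exists_max_eq hum hwm hwr ha' hs hua' (hws.trans_le hγ.1.2))

lemma reach_min (hum : Monotone u) (hwm : Monotone w) (hur : OutputRough u)
    (hwr : OutputRough w) (h1 : reach u π a h = Icc α₁ β₁) (h2 : reach w π a h = Icc α₂ β₂) :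
    reach (fun x => min (u x) (w x)) π a h = Icc (min α₁ α₂) (min β₁ β₂) := by
  wlog hα : α₁ ≤ α₂ generalizing u w α₁ β₁ α₂ β₂
  · simpa only [min_comm] using this hwm hum hwr hur h2 h1 (le_of_not_ge hα)
  ext γ
  constructor
  · intro hγ
    obtain ⟨a', ha', rfl⟩ := mem_reach.1 hγ
    have hu := mem_Icc.1 (h1 ▸ mem_reach.2 ⟨a', ha', rfl⟩)
    have hw := mem_Icc.1 (h2 ▸ mem_reach.2 ⟨a', ha', rfl⟩)
    exact mem_Icc.2 ⟨by omega, by omega⟩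
  · intro hγ
    rw [mem_Icc, min_eq_left hα, le_min_iff] at hγ
    obtain ⟨a', ha', hua'⟩ := mem_reach.1 (h1 ▸ mem_Icc.2 ⟨hγ.1, hγ.2.1⟩)
    obtain ⟨s, hs, hws⟩ := mem_reach.1 (h2 ▸ right_mem_Icc.2 (le_of_reach_eq_Icc h2))
    exact mem_reach.2 (exists_min_eq hum hwm hwr ha' hs hua' (hγ.2.2.trans_eq hws.symm))

end Reach

lemma OutputRough.max (hum : Monotone u) (hwm : Monotone w) (hur : OutputRough u)
    (hwr : OutputRough w) : OutputRough fun x => max (u x) (w x) := fun a π h => by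
  obtain ⟨α₁, β₁, h1⟩ := hur a π h
  obtain ⟨α₂, β₂, h2⟩ := hwr a π h
  exact ⟨_, _, reach_max hum hwm hur hwr h1 h2⟩

lemma OutputRough.min (hum : Monotone u) (hwm : Monotone w) (hur : OutputRough u)
    (hwr : OutputRough w) : OutputRough fun x => min (u x) (w x) := fun a π h => by
  obtain ⟨α₁, β₁, h1⟩ := hur a π h
  obtain ⟨α₂, β₂, h2⟩ := hwr a π h
  exact ⟨_, _, reach_min hum hwm hur hwr h1 h2⟩

lemma image_max_eq_and_image_min_eq {K : Finset ℤ} (hum : Monotone u) (hwm : Monotone w)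
    (hur : OutputRough u) (hwr : OutputRough w) (hu : univ.image u = K) (hw : univ.image w = K) :
    univ.image (fun x => max (u x) (w x)) = K ∧ univ.image (fun x => min (u x) (w x)) = K := by
  rcases isEmpty_or_nonempty (Fin n → J) with hempty | ⟨⟨a₀⟩⟩
  · simp only [← hu, univ_eq_empty, image_empty, and_self]
  obtain ⟨α, β, hK⟩ := hur a₀ 1 0
  rw [reach_zero, hu] at hK
  have h1 : reach u 1 a₀ 0 = Icc α β := by rw [reach_zero, hu, hK]
  have h2 : reach w 1 a₀ 0 = Icc α β := by rw [reach_zero, hw, hK]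
  rw [← reach_zero _ 1 a₀, ← reach_zero _ 1 a₀, reach_max hum hwm hur hwr h1 h2,
    reach_min hum hwm hur hwr h1 h2, max_self, max_self, min_self, min_self, hK]
  exact ⟨rfl, rfl⟩

end

theorem sup_inf_output_rough_general {n : ℕ} {J : Type*} [Fintype J] [LinearOrder J]
    (K : Finset ℤ)
    (u w : (Fin n → J) → ℤ)
    (hum : Monotone u) (hwm : Monotone w)
    (husurj : Finset.univ.image u = K) (hwsurj : Finset.univ.image w = K)
    (hur : OutputRough u) (hwr : OutputRough w) :
    Monotone (fun a => max (u a) (w a)) ∧ Monotone (fun a => min (u a) (w a)) ∧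
    OutputRough (fun a => max (u a) (w a)) ∧ OutputRough (fun a => min (u a) (w a)) ∧
    Finset.univ.image (fun a => max (u a) (w a)) = K ∧
    Finset.univ.image (fun a => min (u a) (w a)) = K :=
  ⟨hum.max hwm, hum.min hwm, hur.max hum hwm hwr, hur.min hum hwm hwr,
    image_max_eq_and_image_min_eq hum hwm hur hwr husurj hwsurj⟩

/-- Lemma 5.1: for nontrivial, surjective (onto `K`), monotone, output-rough games `u`
and `w`, the pointwise max `u ∨ w` and pointwise min `u ∧ w` are again nontrivial,
surjective, monotone and output-rough. -/
theorem sup_inf_output_rough {n : ℕ} {J : Type*} [Fintype J] [LinearOrder J]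
    (K : Finset ℤ) (hK : 2 ≤ K.card)
    (u w : (Fin n → J) → ℤ)
    (hum : Monotone u) (hwm : Monotone w)
    (husurj : Finset.univ.image u = K) (hwsurj : Finset.univ.image w = K)
    (hur : OutputRough u) (hwr : OutputRough w) :
    Monotone (fun a => max (u a) (w a)) ∧ Monotone (fun a => min (u a) (w a)) ∧
    OutputRough (fun a => max (u a) (w a)) ∧ OutputRough (fun a => min (u a) (w a)) ∧
    Finset.univ.image (fun a => max (u a) (w a)) = K ∧
    Finset.univ.image (fun a => min (u a) (w a)) = K :=
  sup_inf_output_rough_general K u w hum hwm husurj hwsurj hur hwr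
end

section
/- Let w₁,…,wₙ ∈ [0,1] with ∑ wᵢ = 1 and let f₁,…,fₙ : [0,1] → [0,1] be continuous monotone functions with fᵢ(0) = 0 and fᵢ(1) = 1. Then v(x) = ∑ᵢ wᵢ·fᵢ(xᵢ) is a surjective, monotone, continuous ([0,1],[0,1]) game, and the continuous influence measure satisfies φᵢ(v) = wᵢ for all i. -/
open MeasureTheory

/-- Maximal extension for continuous games: undeclared coordinates set to `1`. -/
noncomputable def cvbar {n : ℕ} (v : (Fin n → ℝ) → ℝ) (π : Equiv.Perm (Fin n))
    (x : Fin n → ℝ) (h : ℕ) : ℝ :=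
  v (fun l => if (π l : ℕ) < h then x l else 1)

/-- Minimal extension: undeclared coordinates set to `0`. -/
noncomputable def cvbot {n : ℕ} (v : (Fin n → ℝ) → ℝ) (π : Equiv.Perm (Fin n))
    (x : Fin n → ℝ) (h : ℕ) : ℝ :=
  v (fun l => if (π l : ℕ) < h then x l else 0)

/-- Influence measure for continuous `([0,1],[0,1])` games (Definition 6.3); player `i`
is at 1-indexed position `π i + 1`. -/
noncomputable def cphi {n : ℕ} (v : (Fin n → ℝ) → ℝ) (i : Fin n) : ℝ :=
  (1 / (n.factorial : ℝ)) *
    ∑ π : Equiv.Perm (Fin n),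
      ∫ x in Set.Icc (0 : Fin n → ℝ) 1,
        ((cvbar v π x (π i) - cvbot v π x (π i)) -
          (cvbar v π x ((π i : ℕ) + 1) - cvbot v π x ((π i : ℕ) + 1)))

/-!
For an additively separable game `v x = ∑ₗ gₗ (xₗ)`, the gap `v̄_{π,h}(x) - v̲_{π,h}(x)`
between the maximal and minimal extensions does not depend on `x`: it is the sum of the
ranges `gₗ 1 - gₗ 0` over the players not yet declared at stage `h`. Declaring player `i`
therefore lowers the gap by exactly `gᵢ 1 - gᵢ 0`, so the integrand of `φᵢ` is this
constant, and averaging a constant over the unit cube and over all orderings returns it.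
For the weighted sum, `gᵢ t = wᵢ fᵢ(t)` and the constant is `wᵢ`.
-/

section WeightedSum

variable {ι : Type*} [Fintype ι]

def weightedSum (w : ι → ℝ) (f : ι → ℝ → ℝ) (x : ι → ℝ) : ℝ :=
  ∑ i, w i * f i (x i)

variable {w : ι → ℝ} {f : ι → ℝ → ℝ}

lemma MonotoneOn.mapsTo_unitInterval {g : ℝ → ℝ} (hg : MonotoneOn g (Set.Icc 0 1))
    (hg0 : g 0 = 0) (hg1 : g 1 = 1) : Set.MapsTo g (Set.Icc 0 1) (Set.Icc 0 1) := by
  simpa only [hg0, hg1] using hg.mapsTo_Icc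

lemma mapsTo_weightedSum (hw : ∀ i, 0 ≤ w i) (hw1 : ∑ i, w i = 1)
    (hf : ∀ i, Set.MapsTo (f i) (Set.Icc 0 1) (Set.Icc 0 1)) :
    Set.MapsTo (weightedSum w f) (Set.Icc 0 1) (Set.Icc 0 1) := by
  intro x hx
  have hfx : ∀ i, f i (x i) ∈ Set.Icc (0 : ℝ) 1 := fun i => hf i ⟨hx.1 i, hx.2 i⟩
  refine ⟨Finset.sum_nonneg fun i _ => mul_nonneg (hw i) (hfx i).1, ?_⟩
  calc weightedSum w f x ≤ ∑ i, w i :=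
        Finset.sum_le_sum fun i _ => mul_le_of_le_one_right (hw i) (hfx i).2
    _ = 1 := hw1

lemma monotoneOn_weightedSum (hw : ∀ i, 0 ≤ w i) (hf : ∀ i, MonotoneOn (f i) (Set.Icc 0 1)) :
    MonotoneOn (weightedSum w f) (Set.Icc 0 1) := fun _ hx _ hy hxy =>
  Finset.sum_le_sum fun i _ => mul_le_mul_of_nonneg_left
    (hf i ⟨hx.1 i, hx.2 i⟩ ⟨hy.1 i, hy.2 i⟩ (hxy i)) (hw i)

lemma continuousOn_weightedSum (hf : ∀ i, ContinuousOn (f i) (Set.Icc 0 1)) :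
    ContinuousOn (weightedSum w f) (Set.Icc 0 1) :=
  continuousOn_finsetSum _ fun i _ => continuousOn_const.mul
    ((hf i).comp (continuous_apply i).continuousOn fun _ hx => ⟨hx.1 i, hx.2 i⟩)

-- Already the diagonal `t ↦ weightedSum w f (fun _ => t)` covers `[0,1]`.
lemma surjOn_weightedSum (hw1 : ∑ i, w i = 1) (hf : ∀ i, ContinuousOn (f i) (Set.Icc 0 1))
    (hf0 : ∀ i, f i 0 = 0) (hf1 : ∀ i, f i 1 = 1) :
    Set.SurjOn (weightedSum w f) (Set.Icc 0 1) (Set.Icc 0 1) := by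
  intro y hy
  have hdiag : ContinuousOn (fun t : ℝ => weightedSum w f fun _ => t) (Set.Icc 0 1) :=
    continuousOn_finsetSum _ fun i _ => continuousOn_const.mul (hf i)
  have hy' : y ∈ Set.Icc (weightedSum w f fun _ => 0) (weightedSum w f fun _ => 1) := by
    simpa [weightedSum, hf0, hf1, hw1] using hy
  obtain ⟨t, ht, rfl⟩ := intermediate_value_Icc zero_le_one hdiag hy'
  exact ⟨fun _ => t, ⟨fun _ => ht.1, fun _ => ht.2⟩, rfl⟩

end WeightedSum

section SeparableGame

variable {n : ℕ}

lemma cvbar_sub_cvbot_separable (g : Fin n → ℝ → ℝ) (π : Equiv.Perm (Fin n))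
    (x : Fin n → ℝ) (h : ℕ) :
    cvbar (fun x => ∑ l, g l (x l)) π x h - cvbot (fun x => ∑ l, g l (x l)) π x h =
      ∑ l, if h ≤ (π l : ℕ) then g l 1 - g l 0 else 0 := by
  simp only [cvbar, cvbot, ← Finset.sum_sub_distrib]
  refine Finset.sum_congr rfl fun l _ => ?_
  by_cases hl : (π l : ℕ) < h
  · simp [hl, not_le.mpr hl]
  · simp [hl, not_lt.mp hl]

lemma marginal_separable (g : Fin n → ℝ → ℝ) (π : Equiv.Perm (Fin n)) (x : Fin n → ℝ)
    (i : Fin n) :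
    (cvbar (fun x => ∑ l, g l (x l)) π x (π i) - cvbot (fun x => ∑ l, g l (x l)) π x (π i)) -
      (cvbar (fun x => ∑ l, g l (x l)) π x ((π i : ℕ) + 1) -
        cvbot (fun x => ∑ l, g l (x l)) π x ((π i : ℕ) + 1)) = g i 1 - g i 0 := by
  rw [cvbar_sub_cvbot_separable, cvbar_sub_cvbot_separable, ← Finset.sum_sub_distrib,
    Finset.sum_eq_single i _ (fun h => absurd (Finset.mem_univ i) h)]
  · simp
  · intro l _ hl
    have hne : (π l : ℕ) ≠ π i := fun h => hl (π.injective (Fin.ext h))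
    have hiff : (π i : ℕ) ≤ π l ↔ (π i : ℕ) + 1 ≤ π l := by omega
    simp only [hiff, sub_self]

lemma setIntegral_unitCube_const (c : ℝ) : ∫ _ in Set.Icc (0 : Fin n → ℝ) 1, c = c := by
  rw [setIntegral_const, measureReal_def,
    Real.volume_Icc_pi_toReal (zero_le_one : (0 : Fin n → ℝ) ≤ 1)]
  simp

lemma cphi_eq_of_marginal_eq (v : (Fin n → ℝ) → ℝ) (i : Fin n) (c : ℝ)
    (hc : ∀ π x, (cvbar v π x (π i) - cvbot v π x (π i)) -
      (cvbar v π x ((π i : ℕ) + 1) - cvbot v π x ((π i : ℕ) + 1)) = c) :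
    cphi v i = c := by
  simp only [cphi, hc, setIntegral_unitCube_const, Finset.sum_const, Finset.card_univ,
    Fintype.card_perm, Fintype.card_fin, nsmul_eq_mul]
  field_simp [n.factorial_ne_zero]

lemma cphi_separable (g : Fin n → ℝ → ℝ) (i : Fin n) :
    cphi (fun x => ∑ l, g l (x l)) i = g i 1 - g i 0 :=
  cphi_eq_of_marginal_eq _ i _ fun π x => marginal_separable g π x i

end SeparableGame

theorem cphi_weighted_sum_general {n : ℕ} (w : Fin n → ℝ)
    (hw : ∀ i, w i ∈ Set.Icc (0 : ℝ) 1) (hw1 : ∑ i, w i = 1)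
    (f : Fin n → ℝ → ℝ)
    (hfc : ∀ i, ContinuousOn (f i) (Set.Icc 0 1))
    (hfm : ∀ i, MonotoneOn (f i) (Set.Icc 0 1))
    (hf0 : ∀ i, f i 0 = 0) (hf1 : ∀ i, f i 1 = 1) :
    Set.MapsTo (fun x : Fin n → ℝ => ∑ i, w i * f i (x i))
        (Set.Icc 0 1) (Set.Icc (0 : ℝ) 1) ∧
    Set.SurjOn (fun x : Fin n → ℝ => ∑ i, w i * f i (x i))
        (Set.Icc 0 1) (Set.Icc (0 : ℝ) 1) ∧
    MonotoneOn (fun x : Fin n → ℝ => ∑ i, w i * f i (x i)) (Set.Icc 0 1) ∧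
    ContinuousOn (fun x : Fin n → ℝ => ∑ i, w i * f i (x i)) (Set.Icc 0 1) ∧
    ∀ i, cphi (fun x => ∑ i, w i * f i (x i)) i = w i := by
  have hw0 : ∀ i, 0 ≤ w i := fun i => (hw i).1
  have hfmap : ∀ i, Set.MapsTo (f i) (Set.Icc 0 1) (Set.Icc 0 1) := fun i =>
    (hfm i).mapsTo_unitInterval (hf0 i) (hf1 i)
  refine ⟨mapsTo_weightedSum hw0 hw1 hfmap, surjOn_weightedSum hw1 hfc hf0 hf1,
    monotoneOn_weightedSum hw0 hfm, continuousOn_weightedSum hfc, fun i => ?_⟩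
  rw [cphi_separable (fun l t => w l * f l t) i]
  simp [hf0, hf1]

/-- Theorem 6.4: the weighted sum `v(x) = ∑ wᵢ·fᵢ(xᵢ)` of continuous monotone functions
`fᵢ : [0,1] → [0,1]` with `fᵢ(0)=0`, `fᵢ(1)=1` and weights summing to one is a
surjective, monotone, continuous `([0,1],[0,1])` game, and `φᵢ(v) = wᵢ`. -/
theorem cphi_weighted_sum {n : ℕ} (w : Fin n → ℝ)
    (hw : ∀ i, w i ∈ Set.Icc (0 : ℝ) 1) (hw1 : ∑ i, w i = 1)
    (f : Fin n → ℝ → ℝ)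
    (hfc : ∀ i, ContinuousOn (f i) (Set.Icc 0 1))
    (hfm : ∀ i, MonotoneOn (f i) (Set.Icc 0 1))
    (hfmap : ∀ i, Set.MapsTo (f i) (Set.Icc 0 1) (Set.Icc 0 1))
    (hf0 : ∀ i, f i 0 = 0) (hf1 : ∀ i, f i 1 = 1) :
    Set.MapsTo (fun x : Fin n → ℝ => ∑ i, w i * f i (x i))
        (Set.Icc 0 1) (Set.Icc (0 : ℝ) 1) ∧
    Set.SurjOn (fun x : Fin n → ℝ => ∑ i, w i * f i (x i))
        (Set.Icc 0 1) (Set.Icc (0 : ℝ) 1) ∧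
    MonotoneOn (fun x : Fin n → ℝ => ∑ i, w i * f i (x i)) (Set.Icc 0 1) ∧
    ContinuousOn (fun x : Fin n → ℝ => ∑ i, w i * f i (x i)) (Set.Icc 0 1) ∧
    ∀ i, cphi (fun x => ∑ i, w i * f i (x i)) i = w i :=
  cphi_weighted_sum_general w hw hw1 f hfc hfm hf0 hf1
end
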